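/- arXiv:1903.06785 — 5 statements merged into one kernel-verified Lean document; each statement's English description precedes it below -/
import Mathlib

section
/- Every closed interval [x, x+w] ⊆ [0,1] of length w < 1/3 is contained, after shifting by one of the two values s ∈ {0, 1/3}, in a dyadic interval of length at most c·w for an absolute constant c; precisely, there exist s ∈ {0,1/3} and integers i ≥ 0, m with [x+s, x+w+s] ⊆ [m/2^i, (m+1)/2^i] and 1/2^i ≤ 8w. -/
/-- Every interval `[x, x+w] ⊆ [0,1]` of length `w < 1/3` is contained,
after shifting by some `s ∈ {0, 1/3}`, in a dyadic interval `[m/2^i, (m+1)/2^i]` of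
length at most `8w`. -/
theorem stmt5 (x w : ℝ) (hx : 0 ≤ x) (hxw : x + w ≤ 1) (hw0 : 0 < w) (hw : w < 1 / 3) :
    ∃ s ∈ ({0, 1 / 3} : Set ℝ), ∃ i m : ℕ,
      (m : ℝ) / 2 ^ i ≤ x + s ∧ x + w + s ≤ ((m : ℝ) + 1) / 2 ^ i ∧
      (1 : ℝ) / 2 ^ i ≤ 8 * w := by
  classical
  by_cases hw8 : 1/8 ≤ w
  · exact ⟨0, Or.inl rfl, 0, 0, by simpa using hx, by simpa using hxw, by norm_num; linarith⟩
  push_neg at hw8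
  have hex : ∃ n : ℕ, (1:ℝ)/2^n ≤ 8*w := by
    obtain ⟨n, hn⟩ := pow_unbounded_of_one_lt (1/(8*w)) (by norm_num : (1:ℝ) < 2)
    refine ⟨n, ?_⟩
    rw [div_le_iff₀ (by positivity)]
    rw [div_lt_iff₀ (by positivity)] at hn
    nlinarith
  set i := Nat.find hex with hi
  have hle : (1:ℝ)/2^i ≤ 8*w := Nat.find_spec hex
  have hipos : 0 < i := by
    rcases Nat.eq_zero_or_pos i with h | h
    · exfalso; rw [h] at hle; norm_num at hle; linarith
    · exact h
  have hmin : ¬ ((1:ℝ)/2^(i-1) ≤ 8*w) := Nat.find_min hex (Nat.sub_lt hipos one_pos)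
  push_neg at hmin
  have h2i : (0:ℝ) < 2^i := by positivity
  have h4w : 4*w < 1/2^i := by
    have hpow : (2:ℝ)^(i-1) * 2 = 2^i := by
      rw [← pow_succ]; congr 1; omega
    have h2i1 : (0:ℝ) < 2^(i-1) := by positivity
    rw [lt_div_iff₀ h2i1] at hmin
    rw [lt_div_iff₀ h2i]
    nlinarith
  set m0 := ⌊x * 2^i⌋₊ with hm0
  have hm0le : (m0:ℝ)/2^i ≤ x := by
    rw [div_le_iff₀ h2i]; exact Nat.floor_le (by positivity)
  have hm0lt : x < ((m0:ℝ)+1)/2^i := by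
    rw [lt_div_iff₀ h2i]; exact Nat.lt_floor_add_one _
  by_cases hc : x + w ≤ ((m0:ℝ)+1)/2^i
  · exact ⟨0, Or.inl rfl, i, m0, by simpa using hm0le, by simpa using hc, hle⟩
  push_neg at hc
  set m1 := ⌊(x+1/3) * 2^i⌋₊ with hm1
  have hm1le : (m1:ℝ)/2^i ≤ x + 1/3 := by
    rw [div_le_iff₀ h2i]; exact Nat.floor_le (by positivity)
  have hm1lt : x + 1/3 < ((m1:ℝ)+1)/2^i := by
    rw [lt_div_iff₀ h2i]; exact Nat.lt_floor_add_one _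
  refine ⟨1/3, Or.inr rfl, i, m1, by linarith, ?_, hle⟩
  by_contra hc2
  push_neg at hc2
  have hm01 : m0 < m1 := by
    have h1 : ((m0:ℝ)+1)/2^i < ((m1:ℝ)+1)/2^i := by linarith
    rw [div_lt_div_iff₀ h2i h2i] at h1
    have : (m0:ℝ) < m1 := by nlinarith
    exact_mod_cast this
  set k := m1 - m0 with hk
  have hkcast : (k:ℝ) = (m1:ℝ) - m0 := by
    rw [hk, Nat.cast_sub hm01.le]
  have hgap1 : 1/3 - w < (k:ℝ)/2^i := by
    rw [hkcast]
    have : (k:ℝ)/2^i = ((m1:ℝ)+1)/2^i - ((m0:ℝ)+1)/2^i := by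
      rw [hkcast]; ring
    rw [hkcast] at this; rw [this]
    linarith
  have hgap2 : (k:ℝ)/2^i < 1/3 + w := by
    have : (k:ℝ)/2^i = ((m1:ℝ)+1)/2^i - ((m0:ℝ)+1)/2^i := by
      rw [hkcast]; ring
    rw [this]
    linarith
  -- multiply by 3*2^i
  have hw2i : 4*w*2^i < 1 := by
    rw [lt_div_iff₀ h2i] at h4w; linarith
  have hg1 : (2:ℝ)^i < 3*(k:ℝ) + 1 := by
    rw [lt_div_iff₀ h2i] at hgap1
    nlinarith
  have hg2 : 3*(k:ℝ) < (2:ℝ)^i + 1 := by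
    rw [div_lt_iff₀ h2i] at hgap2
    nlinarith
  have h1 : (2:ℕ)^i < 3*k + 1 := by exact_mod_cast hg1
  have h2 : 3*k < 2^i + 1 := by exact_mod_cast hg2
  have heq : 3*k = 2^i := by omega
  have hdvd : 3 ∣ 2^i := ⟨k, heq.symm⟩
  have := Nat.Prime.dvd_of_dvd_pow (by norm_num) hdvd
  norm_num at this
end

section
/- Let P be a finite set of points in 1D, each colored red or blue, and let k ≤ |P|. Let K_r be the set of integers k_r such that there exists an interval containing exactly k points of P and exactly k_r red points. Then K_r is a contiguous range of integers: if a, b ∈ K_r and a ≤ c ≤ b, then c ∈ K_r. -/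
/-!
Sort `P` as `x₀ < x₁ < ⋯ < xₙ₋₁`. The points of `P` in an interval always occupy consecutive
positions, so for `k > 0` the possible red counts are exactly the red counts of the windows
`{xᵢ, …, xᵢ₊ₖ₋₁}`, `i + k ≤ n`. Sliding a window one step to the right removes one point and adds
one, so its red count changes by at most one, and a discrete intermediate value theorem fills in
every value between two attained ones.
-/

open Set

theorem Nat.exists_eq_of_step_le_one {f : ℕ → ℕ}
    (hf : ∀ i, f (i + 1) ≤ f i + 1 ∧ f i ≤ f (i + 1) + 1) {m n c : ℕ} (hmn : m ≤ n)
    (hc : min (f m) (f n) ≤ c ∧ c ≤ max (f m) (f n)) : ∃ j ∈ Icc m n, f j = c := by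
  induction n, hmn using Nat.le_induction with
  | base => exact ⟨m, left_mem_Icc.2 le_rfl, by omega⟩
  | succ n hmn ih =>
    by_cases hcn : min (f m) (f n) ≤ c ∧ c ≤ max (f m) (f n)
    · obtain ⟨j, hj, rfl⟩ := ih hcn
      exact ⟨j, Icc_subset_Icc_right n.le_succ hj, rfl⟩
    · exact ⟨n + 1, right_mem_Icc.2 (hmn.trans n.le_succ), by have := hf n; omega⟩

theorem Nat.ordConnected_image_of_step_le_one {f : ℕ → ℕ}
    (hf : ∀ i, f (i + 1) ≤ f i + 1 ∧ f i ≤ f (i + 1) + 1) {S : Set ℕ} (hS : S.OrdConnected) :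
    (f '' S).OrdConnected := by
  refine ⟨?_⟩
  rintro _ ⟨i, hi, rfl⟩ _ ⟨j, hj, rfl⟩ c ⟨hic, hcj⟩
  rcases le_total i j with hij | hji
  · obtain ⟨l, hl, rfl⟩ := Nat.exists_eq_of_step_le_one hf hij (c := c) (by omega)
    exact ⟨l, hS.out hi hj hl, rfl⟩
  · obtain ⟨l, hl, rfl⟩ := Nat.exists_eq_of_step_le_one hf hji (c := c) (by omega)
    exact ⟨l, hS.out hj hi hl, rfl⟩

theorem Set.ncard_inter_le_ncard_inter_add_one {β : Type*} {A B : Set β} {x : β}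
    (hB : B.Finite) (hAB : A ⊆ insert x B) (Q : Set β) :
    (A ∩ Q).ncard ≤ (B ∩ Q).ncard + 1 := by
  refine (ncard_le_ncard ?_ ((hB.inter_of_left Q).insert x)).trans (ncard_insert_le _ _)
  rintro y ⟨hyA, hyQ⟩
  rcases hAB hyA with rfl | hyB
  · exact mem_insert _ _
  · exact mem_insert_of_mem _ ⟨hyB, hyQ⟩

theorem ncard_Ico_inter_step_le_one (Q : Set ℕ) (k i : ℕ) :
    (Ico (i + 1) (i + 1 + k) ∩ Q).ncard ≤ (Ico i (i + k) ∩ Q).ncard + 1 ∧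
      (Ico i (i + k) ∩ Q).ncard ≤ (Ico (i + 1) (i + 1 + k) ∩ Q).ncard + 1 := by
  constructor
  · refine ncard_inter_le_ncard_inter_add_one (x := i + k) (finite_Ico _ _) (fun x hx => ?_) Q
    simp only [mem_insert_iff, mem_Ico] at hx ⊢
    omega
  · refine ncard_inter_le_ncard_inter_add_one (x := i) (finite_Ico _ _) (fun x hx => ?_) Q
    simp only [mem_insert_iff, mem_Ico] at hx ⊢
    omega

theorem Set.OrdConnected.exists_eq_Ico_ncard_nat {I : Set ℕ} (hI : I.OrdConnected)
    (hbdd : BddAbove I) : ∃ i, I = Ico i (i + I.ncard) := by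
  rcases I.eq_empty_or_nonempty with rfl | hne
  · exact ⟨0, by simp⟩
  obtain ⟨a, b, hab, rfl⟩ : ∃ a b, a ≤ b ∧ I = Icc a b :=
    ⟨sInf I, sSup I, csInf_le_csSup hne (OrderBot.bddBelow I) hbdd,
      (hne.ordConnected_iff_of_bdd (OrderBot.bddBelow I) hbdd).1 hI⟩
  refine ⟨a, ?_⟩
  ext x
  simp only [mem_Icc, mem_Ico, ncard_Icc_nat]
  omega

variable {α : Type*} [LinearOrder α]

/-- The set `K_r`, with `R` the set of red points. -/
def redCounts (P R : Set α) (k : ℕ) : Set ℕ :=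
  {r | ∃ u v, u ≤ v ∧ (P ∩ Icc u v).ncard = k ∧ (P ∩ (Icc u v ∩ R)).ncard = r}

theorem redCounts_zero_subset {P : Set α} (hP : P.Finite) (R : Set α) :
    redCounts P R 0 ⊆ {0} := by
  rintro _ ⟨u, v, -, hcard, rfl⟩
  rw [mem_singleton_iff, ← Nat.le_zero, ← hcard]
  exact ncard_le_ncard (inter_subset_inter_right _ inter_subset_left) (hP.inter_of_left _)

namespace OrderEmbedding

variable {n : ℕ} (e : Fin n ↪o α)

def positions (S : Set α) : Set ℕ := Fin.val '' (e ⁻¹' S)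

theorem ncard_range_inter (S : Set α) : (range e ∩ S).ncard = (e.positions S).ncard := by
  rw [← image_preimage_eq_range_inter, ncard_image_of_injective _ e.injective, positions,
    ncard_image_of_injective _ Fin.val_injective]

theorem positions_inter (S T : Set α) :
    e.positions (S ∩ T) = e.positions S ∩ e.positions T := by
  rw [positions, preimage_inter, image_inter Fin.val_injective]
  rfl

theorem positions_subset_Iio (S : Set α) : e.positions S ⊆ Iio n := by
  rintro _ ⟨j, -, rfl⟩
  exact j.isLt

theorem positions_Icc (i j : Fin n) : e.positions (Icc (e i) (e j)) = Icc (i : ℕ) j := by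
  ext m
  constructor
  · rintro ⟨l, ⟨hil, hlj⟩, rfl⟩
    exact ⟨e.le_iff_le.1 hil, e.le_iff_le.1 hlj⟩
  · rintro ⟨him, hmj⟩
    exact ⟨⟨m, hmj.trans_lt j.isLt⟩, ⟨e.le_iff_le.2 him, e.le_iff_le.2 hmj⟩, rfl⟩

theorem ordConnected_positions_Icc (u v : α) : (e.positions (Icc u v)).OrdConnected := by
  refine ⟨?_⟩
  rintro _ ⟨i, hi, rfl⟩ _ ⟨j, hj, rfl⟩
  rw [← e.positions_Icc]
  exact image_mono (preimage_mono (Icc_subset_Icc hi.1 hj.2))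

theorem exists_positions_Icc_eq_Ico {u v : α} {k : ℕ} (hk : 0 < k)
    (hcard : (e.positions (Icc u v)).ncard = k) :
    ∃ i, i + k ≤ n ∧ e.positions (Icc u v) = Ico i (i + k) := by
  obtain ⟨i, hi⟩ := (e.ordConnected_positions_Icc u v).exists_eq_Ico_ncard_nat
    ⟨n, fun _ hx => (e.positions_subset_Iio _ hx).le⟩
  rw [hcard] at hi
  have hlast : i + k - 1 ∈ e.positions (Icc u v) := hi ▸ ⟨by omega, by omega⟩
  have hlast_lt : i + k - 1 < n := e.positions_subset_Iio _ hlast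
  exact ⟨i, by omega, hi⟩

theorem exists_positions_Icc_eq_Ico_of_add_le {i k : ℕ} (hk : 0 < k) (hik : i + k ≤ n) :
    ∃ u v, u ≤ v ∧ e.positions (Icc u v) = Ico i (i + k) := by
  refine ⟨e ⟨i, by omega⟩, e ⟨i + k - 1, by omega⟩, e.monotone (Fin.mk_le_mk.2 (by omega)), ?_⟩
  rw [positions_Icc]
  ext m
  simp only [mem_Icc, mem_Ico]
  omega

-- `i < n + 1 - k` says `i + k ≤ n`, also when `k > n + 1` truncates the subtraction.
theorem redCounts_range_eq_image (R : Set α) {k : ℕ} (hk : 0 < k) :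
    redCounts (range e) R k =
      (fun i => (Ico i (i + k) ∩ e.positions R).ncard) '' Iio (n + 1 - k) := by
  ext r
  simp only [redCounts, mem_image, mem_Iio, ncard_range_inter, positions_inter]
  constructor
  · rintro ⟨u, v, -, hcard, rfl⟩
    obtain ⟨i, hik, hi⟩ := e.exists_positions_Icc_eq_Ico hk hcard
    exact ⟨i, by omega, by rw [hi]⟩
  · rintro ⟨i, hi, rfl⟩
    obtain ⟨u, v, huv, hI⟩ := e.exists_positions_Icc_eq_Ico_of_add_le (i := i) hk (by omega)
    exact ⟨u, v, huv, by rw [hI, ncard_Ico_nat]; omega, by rw [hI]⟩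

end OrderEmbedding

theorem Finset.ordConnected_redCounts (P : Finset α) (R : Set α) (k : ℕ) :
    (redCounts (↑P : Set α) R k).OrdConnected := by
  rcases k.eq_zero_or_pos with rfl | hk
  · refine ⟨fun x hx y hy z hz => ?_⟩
    obtain rfl := redCounts_zero_subset P.finite_toSet R hx
    obtain rfl := redCounts_zero_subset P.finite_toSet R hy
    rwa [le_antisymm hz.2 hz.1]
  rw [← P.range_orderEmbOfFin rfl, OrderEmbedding.redCounts_range_eq_image _ R hk]
  exact Nat.ordConnected_image_of_step_le_one (ncard_Ico_inter_step_le_one _ k) ordConnected_Iio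

theorem stmt6_general (P : Finset ℝ) (color : ℝ → Bool) (k : ℕ)
    (Kr : Set ℕ)
    (hKr : Kr = {r : ℕ | ∃ u v : ℝ, u ≤ v ∧
        ((↑P : Set ℝ) ∩ Set.Icc u v).ncard = k ∧
        ({p : ℝ | p ∈ P ∧ p ∈ Set.Icc u v ∧ color p = true}).ncard = r})
    (a b c : ℕ) (ha : a ∈ Kr) (hb : b ∈ Kr) (hac : a ≤ c) (hcb : c ≤ b) :
    c ∈ Kr := by
  subst hKr
  exact (P.ordConnected_redCounts {p | color p = true} k).out ha hb ⟨hac, hcb⟩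

/-- For a finite set `P` of red/blue points in 1D and `k ≤ |P|`, the set
`K_r` of possible red counts of intervals containing exactly `k` points of `P` is a
contiguous range of integers. -/
theorem stmt6 (P : Finset ℝ) (color : ℝ → Bool) (k : ℕ) (hk : k ≤ P.card)
    (Kr : Set ℕ)
    (hKr : Kr = {r : ℕ | ∃ u v : ℝ, u ≤ v ∧
        ((↑P : Set ℝ) ∩ Set.Icc u v).ncard = k ∧
        ({p : ℝ | p ∈ P ∧ p ∈ Set.Icc u v ∧ color p = true}).ncard = r})
    (a b c : ℕ) (ha : a ∈ Kr) (hb : b ∈ Kr) (hac : a ≤ c) (hcb : c ≤ b) :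
    c ∈ Kr :=
  stmt6_general P color k Kr hKr a b c ha hb hac hcb
end

section
/- Let P be a set of n points in the plane and let t = n - k. Any axis-aligned rectangle containing exactly k points of P (with t outliers) that has minimum perimeter (or minimum area) among such rectangles has each of its four sides determined by the 4t+4 extreme points: specifically, if Q ⊆ P consists of the t+1 leftmost, t+1 rightmost, t+1 topmost, and t+1 bottommost points of P, then the optimal rectangle for P with parameter k contains all points of P \ Q, and its restriction to an optimization over Q (with adjusted count) yields the same optimum. In particular, every point of P excluded by the optimal rectangle belongs to Q. -/
/-- The axis-aligned rectangle `[x₁,x₂] × [y₁,y₂]` as a subset of the plane. -/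
def rect (x₁ x₂ y₁ y₂ : ℝ) : Set (ℝ × ℝ) :=
  {p : ℝ × ℝ | x₁ ≤ p.1 ∧ p.1 ≤ x₂ ∧ y₁ ≤ p.2 ∧ p.2 ≤ y₂}

/-- With `t = n - k` outliers, let `Q` consist of the `t+1` leftmost,
rightmost, topmost and bottommost points of the general-position point set `P`.  Any
minimum-perimeter (resp. minimum-area) axis-aligned rectangle containing at least `k`
points of `P` contains all points of `P \ Q`; i.e., every excluded point belongs to `Q`. -/
theorem stmt9 (P : Finset (ℝ × ℝ)) (n k t : ℕ)
    (hn : P.card = n) (hkn : k ≤ n) (ht : t = n - k)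
    (hgen : ∀ p ∈ P, ∀ q ∈ P, p ≠ q → p.1 ≠ q.1 ∧ p.2 ≠ q.2)
    (Q : Finset (ℝ × ℝ))
    (hQ : Q = P.filter fun p =>
        (P.filter fun q => q.1 < p.1).card ≤ t ∨
        (P.filter fun q => p.1 < q.1).card ≤ t ∨
        (P.filter fun q => q.2 < p.2).card ≤ t ∨
        (P.filter fun q => p.2 < q.2).card ≤ t)
    (obj : ℝ → ℝ → ℝ → ℝ → ℝ)
    (hobj : obj = (fun x₁ x₂ y₁ y₂ => 2 * ((x₂ - x₁) + (y₂ - y₁))) ∨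
            obj = (fun x₁ x₂ y₁ y₂ => (x₂ - x₁) * (y₂ - y₁)))
    (x₁ x₂ y₁ y₂ : ℝ) (hx : x₁ ≤ x₂) (hy : y₁ ≤ y₂)
    (henc : k ≤ ((↑P : Set (ℝ × ℝ)) ∩ rect x₁ x₂ y₁ y₂).ncard)
    (hmin : ∀ x₁' x₂' y₁' y₂' : ℝ, x₁' ≤ x₂' → y₁' ≤ y₂' →
      k ≤ ((↑P : Set (ℝ × ℝ)) ∩ rect x₁' x₂' y₁' y₂').ncard →
      obj x₁ x₂ y₁ y₂ ≤ obj x₁' x₂' y₁' y₂') :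
    ∀ p ∈ P, p ∉ rect x₁ x₂ y₁ y₂ → p ∈ Q := by
  classical
  -- The set of points of P outside the rectangle has cardinality ≤ t.
  have hset : ((↑P : Set (ℝ × ℝ)) ∩ rect x₁ x₂ y₁ y₂)
      = ↑(P.filter fun q => q ∈ rect x₁ x₂ y₁ y₂) := by
    ext q; simp [Finset.mem_filter, and_comm]
  rw [hset, Set.ncard_coe_finset] at henc
  have hsum := Finset.card_filter_add_card_filter_not
    (s := P) (p := fun q => q ∈ rect x₁ x₂ y₁ y₂)
  have hout : (P.filter fun q => q ∉ rect x₁ x₂ y₁ y₂).card ≤ t := by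
    omega
  intro p hp hpr
  subst hQ
  rw [Finset.mem_filter]
  refine ⟨hp, ?_⟩
  have hpr' : p.1 < x₁ ∨ x₂ < p.1 ∨ p.2 < y₁ ∨ y₂ < p.2 := by
    by_contra h
    push_neg at h
    exact hpr ⟨h.1, h.2.1, h.2.2.1, h.2.2.2⟩
  rcases hpr' with h | h | h | h
  · exact Or.inl (le_trans (Finset.card_le_card (fun q hq => by
      rw [Finset.mem_filter] at hq ⊢
      exact ⟨hq.1, fun hr => absurd hr.1 (not_le.2 (hq.2.trans h))⟩)) hout)
  · refine Or.inr (Or.inl (le_trans (Finset.card_le_card (fun q hq => by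
      rw [Finset.mem_filter] at hq ⊢
      exact ⟨hq.1, fun hr => absurd hr.2.1 (not_le.2 (h.trans hq.2))⟩)) hout))
  · refine Or.inr (Or.inr (Or.inl (le_trans (Finset.card_le_card (fun q hq => by
      rw [Finset.mem_filter] at hq ⊢
      exact ⟨hq.1, fun hr => absurd hr.2.2.1 (not_le.2 (hq.2.trans h))⟩)) hout)))
  · refine Or.inr (Or.inr (Or.inr (le_trans (Finset.card_le_card (fun q hq => by
      rw [Finset.mem_filter] at hq ⊢
      exact ⟨hq.1, fun hr => absurd hr.2.2.2 (not_le.2 (h.trans hq.2))⟩)) hout)))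
end

section
/- In the shallow-cutting sweep construction, each split event replaces an active interval containing exactly 2k active points by two intervals containing exactly k active points each; since active point sets of distinct intervals at any fixed time are disjoint subsets of P, the total number of split events is at most n/k, and hence the family F produced has at most 2⌈n/k⌉ sets. -/
/-- Abstract counting for the shallow-cutting sweep.  Starting from the
trivial partition `{P}` of the `n`-point ground set, each split event replaces a part `C`
of the current partition by two disjoint parts `C₁, C₂` covering `C`, where `C` carries a
set `B` of exactly `2k` active points split evenly (`k` active points in each child).
Then the number `m` of split events is at most `n / k`, and hence the family `F`
produced by the construction (one set per split plus one per pair of consecutive final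
intervals, i.e. `2m` sets) has at most `2⌈n/k⌉` sets. -/
theorem stmt11 {α : Type*} [DecidableEq α] (P : Finset α) (n k m : ℕ)
    (hn : P.card = n) (hk : 1 ≤ k)
    (Part : ℕ → Finset (Finset α))
    (h0 : Part 0 = {P})
    (hstep : ∀ s < m, ∃ C ∈ Part s, ∃ C₁ C₂ B : Finset α,
      C₁ ∪ C₂ = C ∧ Disjoint C₁ C₂ ∧
      B ⊆ C ∧ B.card = 2 * k ∧ (B ∩ C₁).card = k ∧ (B ∩ C₂).card = k ∧
      Part (s + 1) = insert C₁ (insert C₂ ((Part s).erase C))) :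
    m ≤ n / k ∧ 2 * m ≤ 2 * ((n + k - 1) / k) := by
  have key : m ≤ n / k := by
    rcases Nat.eq_zero_or_pos m with hm | hm
    · exact hm ▸ Nat.zero_le _
    -- from the first split, n ≥ 2k
    have hkn : k ≤ n := by
      obtain ⟨C, hC, C₁, C₂, B, hunion, hdis, hB, hBcard, hB1, hB2, heq⟩ := hstep 0 hm
      rw [h0, Finset.mem_singleton] at hC
      subst hC
      have := Finset.card_le_card hB
      omega
    have inv : ∀ s ≤ m, (∀ C ∈ Part s, C ⊆ P) ∧
        (∀ C ∈ Part s, k ≤ C.card) ∧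
        ((Part s : Set (Finset α)).Pairwise (Disjoint · ·)) ∧
        (Part s).card = s + 1 := by
      intro s
      induction s with
      | zero =>
        intro _
        rw [h0]
        refine ⟨?_, ?_, ?_, ?_⟩ <;> simp [hn, hkn, Set.pairwise_singleton]
      | succ s ih =>
        intro hs
        obtain ⟨hsub, hcardk, hdisj, hcount⟩ := ih (by omega)
        obtain ⟨C, hC, C₁, C₂, B, hunion, hdis, hB, hBcard, hB1, hB2, heq⟩ :=
          hstep s (by omega)
        have hC1sub : C₁ ⊆ C := hunion ▸ Finset.subset_union_left
        have hC2sub : C₂ ⊆ C := hunion ▸ Finset.subset_union_right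
        have hC1k : k ≤ C₁.card := hB1 ▸ Finset.card_le_card Finset.inter_subset_right
        have hC2k : k ≤ C₂.card := hB2 ▸ Finset.card_le_card Finset.inter_subset_right
        have hC1ne : C₁.Nonempty := Finset.card_pos.mp (by omega)
        have hC2ne : C₂.Nonempty := Finset.card_pos.mp (by omega)
        -- disjointness of the children with old parts
        have hdis1 : ∀ D ∈ (Part s).erase C, Disjoint C₁ D := by
          intro D hD
          have hDmem := Finset.mem_of_mem_erase hD
          have hDne := Finset.ne_of_mem_erase hD
          exact (hdisj hC hDmem hDne.symm).mono_left hC1sub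
        have hdis2 : ∀ D ∈ (Part s).erase C, Disjoint C₂ D := by
          intro D hD
          have hDmem := Finset.mem_of_mem_erase hD
          have hDne := Finset.ne_of_mem_erase hD
          exact (hdisj hC hDmem hDne.symm).mono_left hC2sub
        have hC1neC2 : C₁ ≠ C₂ := by
          intro h
          exact hC1ne.ne_empty (disjoint_self.mp (h ▸ hdis))
        have hC2notin : C₂ ∉ (Part s).erase C := by
          intro h
          exact hC2ne.ne_empty (disjoint_self.mp (hdis2 _ h))
        have hC1notin : C₁ ∉ insert C₂ ((Part s).erase C) := by
          intro h
          rcases Finset.mem_insert.mp h with h | h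
          · exact hC1neC2 h
          · exact hC1ne.ne_empty (disjoint_self.mp (hdis1 _ h))
        refine ⟨?_, ?_, ?_, ?_⟩
        · intro D hD
          rw [heq] at hD
          rcases Finset.mem_insert.mp hD with h | h
          · exact h ▸ hC1sub.trans (hsub C hC)
          rcases Finset.mem_insert.mp h with h | h
          · exact h ▸ hC2sub.trans (hsub C hC)
          · exact hsub D (Finset.mem_of_mem_erase h)
        · intro D hD
          rw [heq] at hD
          rcases Finset.mem_insert.mp hD with h | h
          · exact h ▸ hC1k
          rcases Finset.mem_insert.mp h with h | h
          · exact h ▸ hC2k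
          · exact hcardk D (Finset.mem_of_mem_erase h)
        · rw [heq]
          intro D hD E hE hne
          simp only [Finset.coe_insert, Set.mem_insert_iff, Finset.mem_coe] at hD hE
          rcases hD with rfl | rfl | hD <;> rcases hE with rfl | rfl | hE
          · exact absurd rfl hne
          · exact hdis
          · exact hdis1 _ hE
          · exact hdis.symm
          · exact absurd rfl hne
          · exact hdis2 _ hE
          · exact (hdis1 _ hD).symm
          · exact (hdis2 _ hD).symm
          · exact hdisj (Finset.mem_of_mem_erase hD) (Finset.mem_of_mem_erase hE) hne
        · rw [heq, Finset.card_insert_of_notMem hC1notin,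
            Finset.card_insert_of_notMem hC2notin, Finset.card_erase_of_mem hC, hcount]
          omega
    obtain ⟨hsub, hcardk, hdisj, hcount⟩ := inv m le_rfl
    -- k * (m+1) ≤ n
    have hsum : (m + 1) * k ≤ n := by
      have h1 : (Part m).card • k ≤ ∑ C ∈ Part m, C.card :=
        Finset.card_nsmul_le_sum _ _ _ hcardk
      have h2 : ((Part m).biUnion id).card = ∑ C ∈ Part m, C.card :=
        Finset.card_biUnion (fun x hx y hy hxy => hdisj hx hy hxy)
      have h3 : (Part m).biUnion id ⊆ P := by
        intro x hx
        obtain ⟨C, hC, hxC⟩ := Finset.mem_biUnion.mp hx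
        exact hsub C hC hxC
      have h4 := Finset.card_le_card h3
      rw [hcount] at h1
      rw [hn] at h4
      simp only [smul_eq_mul] at h1
      omega
    rw [Nat.le_div_iff_mul_le hk]
    nlinarith
  refine ⟨key, ?_⟩
  have : n / k ≤ (n + k - 1) / k := Nat.div_le_div_right (by omega)
  omega
end

section
/- Let p_1 ≤ ... ≤ p_n be sorted reals, k ≤ n, and let D ⊆ {1,...,n} with |D| = q. The minimum length of an interval containing exactly k points of {p_i : i ∉ D} equals the minimum of p_j - p_i over pairs i ≤ j with i, j ∉ D such that |{m : i ≤ m ≤ j, m ∉ D}| = k, and every such pair (i,j) satisfies k - 1 ≤ j - i ≤ k - 1 + q. -/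
lemma aux_pair {n : ℕ} (U : Finset (Fin n)) (k : ℕ) (hk1 : 1 ≤ k) (hk : k ≤ U.card) :
    ∃ i j : Fin n, i ∈ U ∧ j ∈ U ∧ i ≤ j ∧
      (U.filter fun m => i ≤ m ∧ m ≤ j).card = k := by
  set f := U.orderIsoOfFin rfl with hf
  have hc : 0 < U.card := lt_of_lt_of_le hk1 hk
  set z : Fin U.card := ⟨0, hc⟩ with hz
  set t : Fin U.card := ⟨k - 1, by omega⟩ with ht
  refine ⟨(f z : Fin n), (f t : Fin n), (f z).2, (f t).2, ?_, ?_⟩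
  · exact Subtype.coe_le_coe.2 (f.le_iff_le.2 (by simp [hz, ht]))
  · have himg : (U.filter fun m => (f z : Fin n) ≤ m ∧ m ≤ (f t : Fin n)) =
        (Finset.Iic t).image (fun s : Fin U.card => (f s : Fin n)) := by
      ext m
      simp only [Finset.mem_filter, Finset.mem_image, Finset.mem_Iic]
      constructor
      · rintro ⟨hmU, h1, h2⟩
        refine ⟨f.symm ⟨m, hmU⟩, ?_, by simp⟩
        have : f (f.symm ⟨m, hmU⟩) ≤ f t := by
          simpa using Subtype.coe_le_coe.1 (by simpa using h2)
        exact f.le_iff_le.1 this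
      · rintro ⟨s, hs, rfl⟩
        refine ⟨(f s).2, ?_, ?_⟩
        · exact Subtype.coe_le_coe.2 (f.le_iff_le.2 (Fin.le_def.mpr (Nat.zero_le _)))
        · exact Subtype.coe_le_coe.2 (f.le_iff_le.2 hs)
    rw [himg, Finset.card_image_of_injective _
      (fun a b hab => f.injective (Subtype.coe_injective hab)), Fin.card_Iic]
    simp [ht]; omega

/-- For sorted distinct reals `p 0 < … < p (n-1)`, a deleted index set `D`
of size `q`, and `k ≤ n - q`, the minimum length of an interval containing exactly `k`
surviving points equals the minimum of `p j - p i` over surviving pairs `i ≤ j` spanning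
exactly `k` surviving indices, and every such pair satisfies `k - 1 ≤ j - i ≤ k - 1 + q`. -/
theorem stmt13 (n k q : ℕ) (p : Fin n → ℝ) (hp : StrictMono p)
    (D : Finset (Fin n)) (hq : D.card = q) (hkn : k ≤ n - q) :
    IsLeast {L : ℝ | ∃ a b : ℝ, a ≤ b ∧ L = b - a ∧
        (Finset.univ.filter fun i : Fin n => i ∉ D ∧ a ≤ p i ∧ p i ≤ b).card = k}
      (sInf {d : ℝ | ∃ i j : Fin n, i ≤ j ∧ i ∉ D ∧ j ∉ D ∧
        (Finset.univ.filter fun m : Fin n => i ≤ m ∧ m ≤ j ∧ m ∉ D).card = k ∧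
        d = p j - p i}) ∧
    ∀ i j : Fin n, i ≤ j → i ∉ D → j ∉ D →
      (Finset.univ.filter fun m : Fin n => i ≤ m ∧ m ≤ j ∧ m ∉ D).card = k →
      (i : ℕ) + k ≤ (j : ℕ) + 1 ∧ (j : ℕ) + 1 ≤ (i : ℕ) + k + q := by
  set S := {d : ℝ | ∃ i j : Fin n, i ≤ j ∧ i ∉ D ∧ j ∉ D ∧
        (Finset.univ.filter fun m : Fin n => i ≤ m ∧ m ≤ j ∧ m ∉ D).card = k ∧
        d = p j - p i} with hS
  have hSfin : S.Finite := by
    apply (Set.finite_range fun ij : Fin n × Fin n => p ij.2 - p ij.1).subset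
    rintro d ⟨i, j, _, _, _, _, rfl⟩
    exact ⟨(i, j), rfl⟩
  constructor
  · -- IsLeast
    rcases Nat.eq_zero_or_pos k with hk0 | hk1
    · subst hk0
      have hSempty : S = ∅ := by
        ext d
        simp only [hS, Set.mem_setOf_eq, Set.mem_empty_iff_false, iff_false]
        rintro ⟨i, j, hij, hiD, hjD, hcard, rfl⟩
        have : i ∈ Finset.univ.filter fun m : Fin n => i ≤ m ∧ m ≤ j ∧ m ∉ D := by
          simp [hij, hiD]
        rw [Finset.card_eq_zero] at hcard
        simp [hcard] at this
      rw [hSempty, Real.sInf_empty]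
      constructor
      · rcases Nat.eq_zero_or_pos n with hn0 | hn1
        · refine ⟨0, 0, le_refl _, by ring, ?_⟩
          subst hn0
          simp [Finset.filter_eq_empty_iff]
        · refine ⟨p ⟨0, hn1⟩ - 1, p ⟨0, hn1⟩ - 1, le_refl _, by ring, ?_⟩
          rw [Finset.card_eq_zero, Finset.filter_eq_empty_iff]
          rintro i -
          rintro ⟨-, h1, h2⟩
          have : p ⟨0, hn1⟩ ≤ p i := hp.monotone (by simp [Fin.le_def])
          linarith
      · rintro L ⟨a, b, hab, rfl, -⟩
        linarith
    · -- k ≥ 1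
      have hSne : S.Nonempty := by
        obtain ⟨i, j, hiU, hjU, hij, hcard⟩ :=
          aux_pair (Finset.univ \ D) k hk1 (by rw [Finset.card_univ_diff]; simpa [hq])
        refine ⟨p j - p i, i, j, hij, by simpa using hiU, by simpa using hjU, ?_, rfl⟩
        rw [← hcard]
        congr 1
        ext m
        simp only [Finset.mem_filter, Finset.mem_sdiff, Finset.mem_univ, true_and]
        tauto
      constructor
      · obtain ⟨i, j, hij, hiD, hjD, hcard, heq⟩ := hSne.csInf_mem hSfin
        refine ⟨p i, p j, hp.monotone hij, heq, ?_⟩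
        rw [← hcard]
        congr 1
        ext m
        simp only [Finset.mem_filter, Finset.mem_univ, true_and, hp.le_iff_le]
        tauto
      · rintro L ⟨a, b, hab, rfl, hcard⟩
        set F := Finset.univ.filter fun i : Fin n => i ∉ D ∧ a ≤ p i ∧ p i ≤ b with hF
        have hFne : F.Nonempty := by
          rw [← Finset.card_pos, hcard]; exact hk1
        set i := F.min' hFne
        set j := F.max' hFne
        have hiF : i ∈ F := F.min'_mem hFne
        have hjF : j ∈ F := F.max'_mem hFne
        simp only [hF, Finset.mem_filter] at hiF hjF
        have hmem : p j - p i ∈ S := by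
          refine ⟨i, j, F.min'_le j (F.max'_mem hFne), hiF.2.1, hjF.2.1, ?_, rfl⟩
          rw [← hcard, hF]
          congr 1
          ext m
          simp only [Finset.mem_filter, Finset.mem_univ, true_and]
          constructor
          · rintro ⟨h1, h2, h3⟩
            exact ⟨h3, le_trans hiF.2.2.1 (hp.monotone h1),
              le_trans (hp.monotone h2) hjF.2.2.2⟩
          · rintro ⟨h1, h2, h3⟩
            have hmF : m ∈ F := by
              rw [hF, Finset.mem_filter]
              exact ⟨Finset.mem_univ m, h1, h2, h3⟩
            exact ⟨F.min'_le m hmF, F.le_max' m hmF, h1⟩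
        calc sInf S ≤ p j - p i := csInf_le hSfin.bddBelow hmem
          _ ≤ b - a := by
            have := hiF.2.2.1; have := hjF.2.2.2; linarith
  · -- bounds
    intro i j hij hiD hjD hcard
    have hsplit := Finset.card_filter_add_card_filter_not
      (s := Finset.Icc i j) (fun m => m ∉ D)
    have hicc : (Finset.Icc i j).card = (j : ℕ) + 1 - (i : ℕ) := Fin.card_Icc i j
    have hfe : (Finset.Icc i j).filter (fun m => m ∉ D) =
        Finset.univ.filter fun m : Fin n => i ≤ m ∧ m ≤ j ∧ m ∉ D := by
      ext m
      simp only [Finset.mem_filter, Finset.mem_Icc, Finset.mem_univ, true_and]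
      tauto
    rw [hfe, hcard, hicc] at hsplit
    have hle : ((Finset.Icc i j).filter (fun m => ¬ m ∉ D)).card ≤ q := by
      rw [← hq]
      apply Finset.card_le_card
      intro m hm
      simp only [Finset.mem_filter, not_not] at hm
      exact hm.2
    have hijn : (i : ℕ) ≤ (j : ℕ) := hij
    omega
end
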